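/- Let h ∈ 𝒮(ℝ²) be a Schwartz function and let ω ∈ S¹ be a unit vector. Then ∫_{ℝ²} (∫_{−∞}^{∞} ĝ(tω) e^{−2πi x·(tω)} dt)² h(x) dx = ∫_{ℝ} (ĝ ∗₁ ĝ)(tω) ĥ(tω) dt for any Schwartz g, where (ĝ ∗₁ ĝ)(tω) = ∫_ℝ ĝ(uω)ĝ((t−u)ω) du is convolution along the line ℝω. -/

import Mathlib

/-!
Expanding the square turns the left side into a double integral over `(s, u) ∈ ℝ²`; integrating
in `x` first (Fubini) replaces `eK x ((s + u) • ω)` against `h` by `ĥ((s + u) ω)`, giving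
`∬ ĝ(sω) ĝ(uω) ĥ((s + u) ω)`. The shear `(t, u) ↦ (u, t - u)` turns the right side into the same
double integral. Everything converges because `t ↦ ĝ(tω)` is a Schwartz function on `ℝ` and `ĥ` is
bounded by `‖h‖₁`.
-/

open MeasureTheory

/-- The Fourier character `e^{-2πi x·ξ}` on `ℝ^d`. -/
noncomputable def eK {d : ℕ} (x ξ : EuclideanSpace ℝ (Fin d)) : ℂ :=
  Complex.exp (((-2 * Real.pi * (inner ℝ x ξ : ℝ) : ℝ) : ℂ) * Complex.I)

/-- The Fourier transform of a function on `ℝ^d`. -/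
noncomputable def FT {d : ℕ} (f : EuclideanSpace ℝ (Fin d) → ℂ)
    (ξ : EuclideanSpace ℝ (Fin d)) : ℂ :=
  ∫ x, f x * eK x ξ

open scoped FourierTransform SchwartzMap

section FourierCharacter

variable {d : ℕ}

lemma norm_eK (x ξ : EuclideanSpace ℝ (Fin d)) : ‖eK x ξ‖ = 1 := by
  simp [eK, Complex.norm_exp]

lemma eK_add_right (x ξ η : EuclideanSpace ℝ (Fin d)) :
    eK x (ξ + η) = eK x ξ * eK x η := by
  simp only [eK, inner_add_right, ← Complex.exp_add]
  push_cast
  ring_nf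

lemma continuous_eK : Continuous fun p : EuclideanSpace ℝ (Fin d) × EuclideanSpace ℝ (Fin d) =>
    eK p.1 p.2 := by
  unfold eK
  fun_prop

lemma FT_eq_fourier (f : EuclideanSpace ℝ (Fin d) → ℂ) : FT f = 𝓕 f := by
  ext ξ
  simp only [FT, eK, Real.fourier_eq', smul_eq_mul, mul_comm]

lemma norm_FT_le_integral_norm (f : EuclideanSpace ℝ (Fin d) → ℂ) (ξ : EuclideanSpace ℝ (Fin d)) :
    ‖FT f ξ‖ ≤ ∫ x, ‖f x‖ :=
  (norm_integral_le_integral_norm _).trans_eq <| by simp [norm_eK]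

end FourierCharacter

lemma SchwartzMap.integrable_comp_smul_const {E F : Type*} [NormedAddCommGroup E]
    [NormedSpace ℝ E] [NormedAddCommGroup F] [NormedSpace ℝ F] (f : 𝓢(E, F)) {ω : E}
    (hω : ω ≠ 0) : Integrable fun t : ℝ => f (t • ω) := by
  let L := ContinuousLinearMap.toSpanSingleton ℝ ω
  have hL : AntilipschitzWith ‖ω‖₊⁻¹ L := L.antilipschitz_of_bound fun t => by
    simp [L, norm_smul, mul_left_comm, norm_ne_zero_iff.mpr hω]
  exact (SchwartzMap.compCLMOfAntilipschitz ℝ L.hasTemperateGrowth hL f).integrable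

section ConvolutionPairing

variable {G : Type*} [AddCommGroup G] [MeasurableSpace G] [MeasurableAdd₂ G]
  {μ : Measure G} [SFinite μ] [μ.IsAddLeftInvariant]

lemma integrable_mul_prod_mul_comp_add {F₁ F₂ H : G → ℂ} (hF₁ : Integrable F₁ μ)
    (hF₂ : Integrable F₂ μ) (hH : AEStronglyMeasurable H μ) {C : ℝ} (hHC : ∀ t, ‖H t‖ ≤ C) :
    Integrable (fun p : G × G => F₁ p.1 * F₂ p.2 * H (p.1 + p.2)) (μ.prod μ) := by
  simp_rw [mul_comm _ (H _)]
  exact (hF₁.mul_prod hF₂).bdd_mul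
    (hH.comp_quasiMeasurePreserving (quasiMeasurePreserving_add μ μ)) (.of_forall fun p => hHC _)

variable [MeasurableNeg G] [μ.IsAddRightInvariant]

lemma integral_convolution_mul_eq_integral_prod {F₁ F₂ H : G → ℂ} (hF₁ : Integrable F₁ μ)
    (hF₂ : Integrable F₂ μ) (hH : AEStronglyMeasurable H μ) {C : ℝ} (hHC : ∀ t, ‖H t‖ ≤ C) :
    ∫ t, (∫ u, F₁ u * F₂ (t - u) ∂μ) * H t ∂μ =
      ∫ p : G × G, F₁ p.1 * F₂ p.2 * H (p.1 + p.2) ∂(μ.prod μ) := by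
  let shear : G × G ≃ᵐ G × G := MeasurableEquiv.prodComm.trans (MeasurableEquiv.shearSubRight G)
  have hshear : MeasurePreserving shear (μ.prod μ) (μ.prod μ) :=
    measurePreserving_prod_sub_swap μ μ
  have hΨ := integrable_mul_prod_mul_comp_add hF₁ hF₂ hH hHC
  have hcomp : (fun z : G × G => F₁ z.2 * F₂ (z.1 - z.2) * H z.1) =
      (fun p : G × G => F₁ p.1 * F₂ p.2 * H (p.1 + p.2)) ∘ shear := by
    ext z
    show _ = F₁ z.2 * F₂ (z.1 - z.2) * H (z.2 + (z.1 - z.2))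
    rw [add_sub_cancel]
  calc ∫ t, (∫ u, F₁ u * F₂ (t - u) ∂μ) * H t ∂μ
      = ∫ t, ∫ u, F₁ u * F₂ (t - u) * H t ∂μ ∂μ := by simp_rw [integral_mul_const]
    _ = ∫ z : G × G, F₁ z.2 * F₂ (z.1 - z.2) * H z.1 ∂(μ.prod μ) := by
      rw [integral_prod _ (hcomp ▸ hshear.integrable_comp_of_integrable hΨ)]
    _ = _ := by
      rw [hcomp]
      exact hshear.integral_comp' (fun p : G × G => F₁ p.1 * F₂ p.2 * H (p.1 + p.2))

end ConvolutionPairing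

section LineIntegral

variable {d : ℕ} (ω : EuclideanSpace ℝ (Fin d))

lemma sq_integral_mul_eK_smul (G : ℝ → ℂ) (x : EuclideanSpace ℝ (Fin d)) :
    (∫ t : ℝ, G t * eK x (t • ω)) ^ 2 =
      ∫ p : ℝ × ℝ, G p.1 * G p.2 * eK x ((p.1 + p.2) • ω) ∂(volume.prod volume) := by
  rw [sq, ← integral_prod_mul]
  congr 1 with p
  rw [add_smul, eK_add_right]
  ring

lemma integral_sq_integral_mul_eK_smul_mul {G : ℝ → ℂ} (hG : Integrable G)
    {h : EuclideanSpace ℝ (Fin d) → ℂ} (hh : Integrable h) :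
    ∫ x, (∫ t : ℝ, G t * eK x (t • ω)) ^ 2 * h x =
      ∫ p : ℝ × ℝ, G p.1 * G p.2 * FT h ((p.1 + p.2) • ω) ∂(volume.prod volume) := by
  have hint : Integrable (Function.uncurry fun x (p : ℝ × ℝ) =>
      G p.1 * G p.2 * eK x ((p.1 + p.2) • ω) * h x) (volume.prod (volume.prod volume)) := by
    have hchar : Continuous fun z : EuclideanSpace ℝ (Fin d) × (ℝ × ℝ) =>
        eK z.1 ((z.2.1 + z.2.2) • ω) :=
      continuous_eK.comp (f := fun z : EuclideanSpace ℝ (Fin d) × (ℝ × ℝ) =>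
        (z.1, (z.2.1 + z.2.2) • ω)) (by fun_prop)
    have hdom : Integrable (fun z : EuclideanSpace ℝ (Fin d) × (ℝ × ℝ) =>
        h z.1 * (G z.2.1 * G z.2.2)) (volume.prod (volume.prod volume)) :=
      hh.mul_prod (hG.mul_prod hG)
    refine (hdom.bdd_mul hchar.aestronglyMeasurable
      (.of_forall fun z => (norm_eK _ _).le)).congr (.of_forall fun z => ?_)
    show _ = G z.2.1 * G z.2.2 * eK z.1 ((z.2.1 + z.2.2) • ω) * h z.1
    ring
  calc ∫ x, (∫ t : ℝ, G t * eK x (t • ω)) ^ 2 * h x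
      = ∫ x, ∫ p : ℝ × ℝ, G p.1 * G p.2 * eK x ((p.1 + p.2) • ω) * h x
          ∂(volume.prod volume) := by
        simp_rw [sq_integral_mul_eK_smul, integral_mul_const]
    _ = ∫ p : ℝ × ℝ, ∫ x, G p.1 * G p.2 * eK x ((p.1 + p.2) • ω) * h x
          ∂volume ∂(volume.prod volume) := integral_integral_swap hint
    _ = _ := by
        congr 1 with p
        simp_rw [FT, ← integral_const_mul, mul_comm (h _), mul_assoc]

end LineIntegral

section Schwartz

variable {d : ℕ} (f : 𝓢(EuclideanSpace ℝ (Fin d), ℂ))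

lemma SchwartzMap.FT_coe : FT f = ⇑(𝓕 f : 𝓢(EuclideanSpace ℝ (Fin d), ℂ)) := by
  rw [FT_eq_fourier, SchwartzMap.fourier_coe]

lemma SchwartzMap.continuous_FT : Continuous (FT f) :=
  f.FT_coe ▸ (𝓕 f).continuous

lemma SchwartzMap.integrable_FT_comp_smul_const {ω : EuclideanSpace ℝ (Fin d)} (hω : ω ≠ 0) :
    Integrable fun t : ℝ => FT f (t • ω) :=
  f.FT_coe ▸ (𝓕 f).integrable_comp_smul_const hω

end Schwartz

theorem slice_plancherel_identity
    (g h : SchwartzMap (EuclideanSpace ℝ (Fin 2)) ℝ)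
    (ω : EuclideanSpace ℝ (Fin 2)) (hω : ‖ω‖ = 1) :
    (∫ x, (∫ t : ℝ, FT (fun y => (g y : ℂ)) (t • ω) * eK x (t • ω))^2 * (h x : ℂ)) =
      ∫ t : ℝ, (∫ u : ℝ, FT (fun y => (g y : ℂ)) (u • ω) *
          FT (fun y => (g y : ℂ)) ((t - u) • ω)) *
        FT (fun y => (h y : ℂ)) (t • ω) := by
  have hω₀ : ω ≠ 0 := norm_ne_zero_iff.mp (hω ▸ one_ne_zero)
  have hG : Integrable fun t : ℝ => FT (fun y => (g y : ℂ)) (t • ω) :=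
    (SchwartzMap.postcompCLM Complex.ofRealCLM g).integrable_FT_comp_smul_const hω₀
  have hH : AEStronglyMeasurable fun t : ℝ => FT (fun y => (h y : ℂ)) (t • ω) :=
    ((SchwartzMap.postcompCLM Complex.ofRealCLM h).continuous_FT.comp
      (by fun_prop)).aestronglyMeasurable
  have hH_bdd (t : ℝ) := norm_FT_le_integral_norm (fun y => (h y : ℂ)) (t • ω)
  exact (integral_sq_integral_mul_eK_smul_mul ω hG h.integrable.ofReal).trans
    (integral_convolution_mul_eq_integral_prod hG hG hH hH_bdd).symm
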